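/- arXiv:1611.07440 — 4 statements merged into one kernel-verified Lean document; each statement's English description precedes it below -/
import Mathlib

section
/- Let Y be a nonnegative random variable with E(Y⁴) < ∞ and let σ* > 0. Then there exists a nonincreasing sequence (δ_n)_{n≥1} of positive real numbers such that δ_n → 0, δ_n²·√n → ∞ as n → ∞, and Σ_{n=1}^∞ 2^{2n}·P(Y > σ*·δ_{2^n}·2^{(n−1)/2}) < ∞. -/
open MeasureTheory Filter
open scoped ENNReal

/-!
For fixed `c > 0`, the indices `n` with `c 2^((n-1)/2) < y` all satisfy `4ⁿ < 4 y⁴ / c⁴`, and a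
sum of distinct powers of `4` is less than four times its largest term; hence
`∑ₙ 4ⁿ 1{c 2^((n-1)/2) < Y} ≤ 16 Y⁴ / c⁴` pointwise and `∑ₙ 4ⁿ P(Y > c 2^((n-1)/2)) < ∞`.
Doing this for `c = σ* 2⁻ᵏ`, `k = 0, 1, …`, a diagonal argument produces `K(n) → ∞` so slowly
that `∑ₙ 4ⁿ P(Y > σ* 2^(-K(n)) 2^((n-1)/2)) < ∞` and `6 K(L) ≤ L`. Then
`δₘ = 2^(-K(log₂ m))` works: `δ_{2ⁿ} = 2^(-K(n))`, and `√m ≥ 2^(log₂ m / 2) ≥ 8^K` gives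
`δₘ² √m ≥ 2^K → ∞`.
-/

theorem tsum_ite_pow_lt_le {b : ℕ} (hb : 2 ≤ b) (B : ℝ≥0∞) :
    ∑' n : ℕ, (if (b : ℝ≥0∞) ^ n < B then (b : ℝ≥0∞) ^ n else 0) ≤ b * B := by
  rw [ENNReal.tsum_eq_iSup_sum]
  refine iSup_le fun F => ?_
  rw [← Finset.sum_filter]
  set s := F.filter (fun n => (b : ℝ≥0∞) ^ n < B)
  rcases s.eq_empty_or_nonempty with hs | hs
  · simp [hs]
  have hN : (b : ℝ≥0∞) ^ s.max' hs < B := (Finset.mem_filter.1 (s.max'_mem hs)).2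
  have hgeom : ∑ n ∈ s, b ^ n < b ^ (s.max' hs + 1) :=
    Nat.geomSum_lt hb fun n hn => Nat.lt_succ_of_le (s.le_max' n hn)
  calc ∑ n ∈ s, (b : ℝ≥0∞) ^ n = ((∑ n ∈ s, b ^ n : ℕ) : ℝ≥0∞) := by push_cast; rfl
    _ ≤ ((b ^ (s.max' hs + 1) : ℕ) : ℝ≥0∞) := by exact_mod_cast hgeom.le
    _ = b * (b : ℝ≥0∞) ^ s.max' hs := by push_cast; ring
    _ ≤ b * B := by gcongr

theorem four_pow_mul_lt_of_mul_two_rpow_lt {c y : ℝ} (hc : 0 < c) {n : ℕ}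
    (h : c * 2 ^ (((n : ℝ) - 1) / 2) < y) : c ^ 4 * 4 ^ n < 4 * y ^ 4 := by
  set t : ℝ := 2 ^ (((n : ℝ) - 1) / 2)
  have ht : t ^ 2 = 2 ^ n / 2 := by
    rw [← Real.rpow_natCast, ← Real.rpow_mul zero_le_two, Nat.cast_ofNat,
      div_mul_cancel₀ _ two_ne_zero, Real.rpow_sub_one two_ne_zero, Real.rpow_natCast]
  calc c ^ 4 * 4 ^ n = 4 * (c * t) ^ 4 := by
        rw [mul_pow, show t ^ 4 = (t ^ 2) ^ 2 by ring, ht,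
          show (4:ℝ) ^ n = (2 ^ n) ^ 2 by rw [← pow_mul, mul_comm, pow_mul]; norm_num]
        ring
    _ < 4 * y ^ 4 := by gcongr

theorem tsum_ite_four_pow_le {c : ℝ} (hc : 0 < c) (y : ℝ) :
    ∑' n : ℕ, (if c * 2 ^ (((n : ℝ) - 1) / 2) < y then (4 : ℝ≥0∞) ^ n else 0)
      ≤ ENNReal.ofReal (16 / c ^ 4) * ENNReal.ofReal (y ^ 4) := by
  set B := ENNReal.ofReal (4 * y ^ 4 / c ^ 4)
  have hB {n : ℕ} (hn : c * 2 ^ (((n : ℝ) - 1) / 2) < y) : ((4 : ℕ) : ℝ≥0∞) ^ n < B := by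
    have h := four_pow_mul_lt_of_mul_two_rpow_lt hc hn
    rw [← ENNReal.ofReal_natCast, ← ENNReal.ofReal_pow (by positivity),
      ENNReal.ofReal_lt_ofReal_iff_of_nonneg (by positivity), lt_div_iff₀ (pow_pos hc 4)]
    push_cast
    linarith
  calc _ ≤ ∑' n : ℕ, (if ((4 : ℕ) : ℝ≥0∞) ^ n < B then ((4 : ℕ) : ℝ≥0∞) ^ n else 0) :=
        ENNReal.tsum_le_tsum fun n => by
          split_ifs with h h'
          exacts [le_rfl, absurd (hB h) h', zero_le, le_rfl]
    _ ≤ (4 : ℕ) * B := tsum_ite_pow_lt_le (by norm_num) B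
    _ = _ := by
        rw [← ENNReal.ofReal_natCast, ← ENNReal.ofReal_mul (by positivity),
          ← ENNReal.ofReal_mul (by positivity)]
        congr 1
        field_simp
        ring

theorem tsum_four_pow_mul_measure_lt_ne_top {Ω : Type*} [MeasurableSpace Ω] {μ : Measure Ω}
    {Y : Ω → ℝ} (hYmeas : Measurable Y) (hY4 : Integrable (fun ω => Y ω ^ 4) μ)
    {c : ℝ} (hc : 0 < c) :
    ∑' n : ℕ, 4 ^ n * μ {ω | c * 2 ^ (((n : ℝ) - 1) / 2) < Y ω} ≠ ∞ := by
  have hmeas (n : ℕ) : MeasurableSet {ω | c * 2 ^ (((n : ℝ) - 1) / 2) < Y ω} :=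
    measurableSet_lt measurable_const hYmeas
  have hfin : ENNReal.ofReal (16 / c ^ 4) * ∫⁻ ω, ENNReal.ofReal (Y ω ^ 4) ∂μ ≠ ∞ :=
    ENNReal.mul_ne_top ENNReal.ofReal_ne_top hY4.lintegral_lt_top.ne
  refine ne_top_of_le_ne_top hfin ?_
  calc ∑' n : ℕ, 4 ^ n * μ {ω | c * 2 ^ (((n : ℝ) - 1) / 2) < Y ω}
      = ∫⁻ ω, ∑' n : ℕ,
          {ω | c * 2 ^ (((n : ℝ) - 1) / 2) < Y ω}.indicator (fun _ => 4 ^ n) ω ∂μ := by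
        rw [lintegral_tsum fun n => (measurable_const.indicator (hmeas n)).aemeasurable]
        simp only [lintegral_indicator_const (hmeas _)]
    _ ≤ ∫⁻ ω, ENNReal.ofReal (16 / c ^ 4) * ENNReal.ofReal (Y ω ^ 4) ∂μ :=
        lintegral_mono fun ω => by
          simpa [Set.indicator_apply] using tsum_ite_four_pow_le hc (Y ω)
    _ = ENNReal.ofReal (16 / c ^ 4) * ∫⁻ ω, ENNReal.ofReal (Y ω ^ 4) ∂μ :=
        lintegral_const_mul _ (hYmeas.pow_const 4).ennreal_ofReal

theorem eventually_tsum_indicator_Ici_le {f : ℕ → ℝ≥0∞} (hf : ∑' n, f n ≠ ∞) {ε : ℝ≥0∞}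
    (hε : 0 < ε) : ∀ᶠ m in atTop, ∑' n, (Set.Ici m).indicator f n ≤ ε := by
  have h := (ENNReal.tendsto_tsum_compl_atTop_zero hf).comp tendsto_finset_range
  filter_upwards [h.eventually_le_const hε] with m hm
  have hcompl : ((Finset.range m : Set ℕ)ᶜ) = Set.Ici m := by ext; simp
  rw [← hcompl, ← tsum_subtype]
  exact hm

theorem exists_monotone_tendsto_tsum_diag_ne_top (f : ℕ → ℕ → ℝ≥0∞)
    (hf : ∀ k, ∑' n, f k n ≠ ∞) {u : ℕ → ℕ} (hu : Tendsto u atTop atTop) :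
    ∃ K : ℕ → ℕ, Monotone K ∧ Tendsto K atTop atTop ∧ (∀ n, K n ≤ u n) ∧
      ∑' n, f (K n) n ≠ ∞ := by
  have hφ_exists : ∀ k, ∀ᶠ m in atTop, (∀ n, m ≤ n → k ≤ u n) ∧
      ∑' n, (Set.Ici m).indicator (f k) n ≤ 2⁻¹ ^ k := fun k =>
    (eventually_forall_ge_atTop.2 (tendsto_atTop.1 hu k)).and
      (eventually_tsum_indicator_Ici_le (hf k)
        (ENNReal.pow_pos (ENNReal.inv_pos.2 ENNReal.ofNat_ne_top) k))
  obtain ⟨φ, hφ, hφP⟩ := extraction_forall_of_eventually hφ_exists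
  -- `K n` is the last `k` whose tail beyond `φ k` has started by time `n`
  set K : ℕ → ℕ := fun n => Nat.findGreatest (fun k => φ k ≤ n) n
  have le_K {k n : ℕ} (h : φ k ≤ n) : k ≤ K n := Nat.le_findGreatest (hφ.le_apply.trans h) h
  have φ_K {n : ℕ} (h : K n ≠ 0) : φ (K n) ≤ n :=
    Nat.findGreatest_of_ne_zero (P := fun k => φ k ≤ n) rfl h
  refine ⟨K, fun a b hab => Nat.findGreatest_mono (fun k hk => hk.trans hab) hab,
    tendsto_atTop_atTop.2 fun k => ⟨φ k, fun n => le_K⟩, fun n => ?_, ?_⟩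
  · rcases eq_or_ne (K n) 0 with h | h
    · simp [h]
    · exact (hφP (K n)).1 n (φ_K h)
  have hdiag (n : ℕ) : f (K n) n ≤ f 0 n + ∑' k, (Set.Ici (φ k)).indicator (f k) n := by
    rcases eq_or_ne (K n) 0 with h | h
    · simp [h]
    · calc f (K n) n = (Set.Ici (φ (K n))).indicator (f (K n)) n :=
            (Set.indicator_of_mem (φ_K h) _).symm
        _ ≤ ∑' k, (Set.Ici (φ k)).indicator (f k) n := ENNReal.le_tsum (K n)
        _ ≤ _ := le_add_self
  refine ne_top_of_le_ne_top (b := ∑' n, f 0 n + 2) (by simpa using hf 0) ?_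
  calc ∑' n, f (K n) n ≤ ∑' n, (f 0 n + ∑' k, (Set.Ici (φ k)).indicator (f k) n) :=
        ENNReal.tsum_le_tsum hdiag
    _ = ∑' n, f 0 n + ∑' k, ∑' n, (Set.Ici (φ k)).indicator (f k) n := by
        rw [ENNReal.tsum_add, ENNReal.tsum_comm]
    _ ≤ ∑' n, f 0 n + ∑' k : ℕ, 2⁻¹ ^ k := by
        gcongr with k
        exact (hφP k).2
    _ = ∑' n, f 0 n + 2 := by rw [ENNReal.tsum_geometric, ENNReal.one_sub_inv_two, inv_inv]

theorem tendsto_nat_log_atTop {b : ℕ} (hb : 1 < b) : Tendsto (Nat.log b) atTop atTop :=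
  Monotone.tendsto_atTop_atTop (fun _ _ h => Nat.log_mono_right h)
    fun k => ⟨b ^ k, (Nat.log_pow hb k).ge⟩

theorem eight_pow_le_sqrt {k m : ℕ} (hm : m ≠ 0) (hk : 6 * k ≤ Nat.log 2 m) :
    (8 : ℝ) ^ k ≤ Real.sqrt m := by
  refine Real.le_sqrt_of_sq_le ?_
  calc ((8 : ℝ) ^ k) ^ 2 = 2 ^ (6 * k) := by
        rw [← pow_mul, mul_comm, pow_mul, pow_mul]; norm_num
    _ ≤ 2 ^ Nat.log 2 m := pow_le_pow_right₀ one_le_two hk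
    _ ≤ m := by exact_mod_cast Nat.pow_log_le_self 2 hm

theorem tendsto_inv_two_pow_sq_mul_sqrt {K : ℕ → ℕ} (hK : Tendsto K atTop atTop)
    (hK6 : ∀ L, 6 * K L ≤ L) :
    Tendsto (fun m : ℕ => ((2 : ℝ)⁻¹ ^ K (Nat.log 2 m)) ^ 2 * Real.sqrt m) atTop atTop := by
  refine tendsto_atTop_mono' _ ?_
    ((tendsto_pow_atTop_atTop_of_one_lt (by norm_num : (1 : ℝ) < 2)).comp
      (hK.comp (tendsto_nat_log_atTop Nat.one_lt_two)))
  filter_upwards [eventually_ne_atTop 0] with m hm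
  set k := K (Nat.log 2 m)
  calc (2 : ℝ) ^ k = ((2 : ℝ)⁻¹ ^ k) ^ 2 * 8 ^ k := by
        rw [← pow_mul, mul_comm k 2, pow_mul, ← mul_pow]; norm_num
    _ ≤ _ := by gcongr; exact eight_pow_le_sqrt hm (hK6 _)

theorem stmt1_general {Ω : Type*} [MeasurableSpace Ω] (μ : Measure Ω)
    (Y : Ω → ℝ) (hYmeas : Measurable Y)
    (hY4 : Integrable (fun ω => Y ω ^ 4) μ)
    (σstar : ℝ) (hσ : 0 < σstar) :
    ∃ δ : ℕ → ℝ, (∀ n, 0 < δ n) ∧ Antitone δ ∧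
      Tendsto δ atTop (nhds 0) ∧
      Tendsto (fun n : ℕ => δ n ^ 2 * Real.sqrt n) atTop atTop ∧
      Summable (fun n : ℕ =>
        (2 : ℝ) ^ (2 * n) *
          (μ {ω | σstar * δ (2 ^ n) * (2 : ℝ) ^ (((n : ℝ) - 1) / 2) < Y ω}).toReal) := by
  set f : ℕ → ℕ → ℝ≥0∞ := fun k n =>
    4 ^ n * μ {ω | σstar * 2⁻¹ ^ k * 2 ^ (((n : ℝ) - 1) / 2) < Y ω}
  have hf (k : ℕ) : ∑' n, f k n ≠ ∞ :=
    tsum_four_pow_mul_measure_lt_ne_top hYmeas hY4 (by positivity)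
  obtain ⟨K, hK_mono, hK, hK_le, hsum⟩ := exists_monotone_tendsto_tsum_diag_ne_top f hf
    (Nat.tendsto_div_const_atTop (by norm_num : 6 ≠ 0))
  have hlog := tendsto_nat_log_atTop Nat.one_lt_two
  refine ⟨fun m => 2⁻¹ ^ K (Nat.log 2 m), fun m => by positivity,
    fun a b hab => pow_le_pow_of_le_one (by norm_num) (by norm_num)
      (hK_mono (Nat.log_mono_right hab)),
    (tendsto_pow_atTop_nhds_zero_of_lt_one (by norm_num) (by norm_num)).comp (hK.comp hlog),
    tendsto_inv_two_pow_sq_mul_sqrt hK fun L => by have := hK_le L; omega, ?_⟩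
  refine (ENNReal.summable_toReal hsum).congr fun n => ?_
  simp only [f, Nat.log_pow Nat.one_lt_two, ENNReal.toReal_mul, ENNReal.toReal_pow,
    ENNReal.toReal_ofNat, pow_mul]
  norm_num

/-- if `Y ≥ 0` has finite fourth moment and `σ* > 0`, there is a nonincreasing
sequence `(δ_n)` of positive reals with `δ_n → 0`, `δ_n² √n → ∞`, and
`Σ_n 2^{2n} P(Y > σ* δ_{2ⁿ} 2^{(n−1)/2}) < ∞`. -/
theorem stmt1 {Ω : Type*} [MeasurableSpace Ω] (μ : Measure Ω) [IsProbabilityMeasure μ]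
    (Y : Ω → ℝ) (hYnonneg : ∀ ω, 0 ≤ Y ω) (hYmeas : Measurable Y)
    (hY4 : Integrable (fun ω => Y ω ^ 4) μ)
    (σstar : ℝ) (hσ : 0 < σstar) :
    ∃ δ : ℕ → ℝ, (∀ n, 0 < δ n) ∧ Antitone δ ∧
      Tendsto δ atTop (nhds 0) ∧
      Tendsto (fun n : ℕ => δ n ^ 2 * Real.sqrt n) atTop atTop ∧
      Summable (fun n : ℕ =>
        (2 : ℝ) ^ (2 * n) *
          (μ {ω | σstar * δ (2 ^ n) * (2 : ℝ) ^ (((n : ℝ) - 1) / 2) < Y ω}).toReal) :=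
  stmt1_general μ Y hYmeas hY4 σstar hσ
end

section
/- Let M be a complex (mn)×(mn) matrix viewed as an element of M_m(ℂ)⊗M_n(ℂ), with m×m blocks M_{kl} (1 ≤ k,l ≤ n). Then for any fixed k ∈ {1,…,n}: Σ_{l=1}^n ‖M_{lk}‖² ≤ m·‖M‖² and Σ_{l=1}^n ‖M_{kl}‖² ≤ m·‖M‖². Consequently (1/n)·Σ_{k,l=1}^n ‖M_{kl}‖² ≤ m·‖M‖². -/
/-!
The operator norm of each block is at most its Frobenius norm. Summing over a block column
`(M_{lk})_l`, the squared entries regroup into the `m` columns `(b, k)` of `M`, each of which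
has squared Euclidean norm at most `‖M‖²`. Block rows reduce to block columns of `Mᴴ`.
-/

/-- The operator (spectral) norm of a square complex matrix, i.e. its norm as an
operator on the Euclidean space. -/
noncomputable def opNorm {ι : Type*} [Fintype ι] [DecidableEq ι] (M : Matrix ι ι ℂ) : ℝ :=
  ‖Matrix.toEuclideanCLM (𝕜 := ℂ) M‖

/-- The `(k,l)` block (an `m × m` matrix) of a matrix `M ∈ M_m(ℂ) ⊗ M_n(ℂ)`,
identified with a matrix indexed by pairs `(a, k)`, `a ∈ Fin m`, `k ∈ Fin n`. -/
def blk {m n : ℕ} (M : Matrix (Fin m × Fin n) (Fin m × Fin n) ℂ) (k l : Fin n) :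
    Matrix (Fin m) (Fin m) ℂ :=
  Matrix.of fun a b => M (a, k) (b, l)

open Matrix

section SquareMatrix

variable {ι : Type*} [Fintype ι] [DecidableEq ι]

lemma sum_norm_sq_col_le_opNorm_sq (A : Matrix ι ι ℂ) (j : ι) :
    ∑ i, ‖A i j‖ ^ 2 ≤ opNorm A ^ 2 := by
  have h := (toEuclideanCLM (𝕜 := ℂ) A).le_opNorm (EuclideanSpace.single j 1)
  rw [PiLp.norm_single, norm_one, mul_one] at h
  calc ∑ i, ‖A i j‖ ^ 2
        = ‖toEuclideanCLM (𝕜 := ℂ) A (EuclideanSpace.single j 1)‖ ^ 2 := by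
        simp [EuclideanSpace.norm_sq_eq, mulVec_single]
    _ ≤ opNorm A ^ 2 := pow_le_pow_left₀ (norm_nonneg _) h 2

lemma opNorm_conjTranspose (A : Matrix ι ι ℂ) : opNorm Aᴴ = opNorm A :=
  l2_opNorm_conjTranspose A

lemma opNorm_sq_le_sum_norm_sq (A : Matrix ι ι ℂ) :
    opNorm A ^ 2 ≤ ∑ i, ∑ j, ‖A i j‖ ^ 2 := by
  set F := ∑ i, ∑ j, ‖A i j‖ ^ 2
  have hF : 0 ≤ F := by positivity
  have hbound : ∀ x, ‖toEuclideanCLM (𝕜 := ℂ) A x‖ ≤ √F * ‖x‖ := fun x ↦ by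
    refine (sq_le_sq₀ (norm_nonneg _) (by positivity)).mp ?_
    rw [mul_pow, Real.sq_sqrt hF, EuclideanSpace.norm_sq_eq, EuclideanSpace.norm_sq_eq,
      Finset.sum_mul]
    refine Finset.sum_le_sum fun i _ ↦ ?_
    calc ‖(toEuclideanCLM (𝕜 := ℂ) A x) i‖ ^ 2
          ≤ (∑ j, ‖A i j‖ * ‖x j‖) ^ 2 := by
          gcongr
          simpa [mulVec, dotProduct] using norm_sum_le Finset.univ fun j ↦ A i j * x j
      _ ≤ (∑ j, ‖A i j‖ ^ 2) * ∑ j, ‖x j‖ ^ 2 := Finset.sum_mul_sq_le_sq_mul_sq _ _ _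
  calc opNorm A ^ 2 ≤ √F ^ 2 := pow_le_pow_left₀ (norm_nonneg _)
        ((toEuclideanCLM (𝕜 := ℂ) A).opNorm_le_bound (Real.sqrt_nonneg F) hbound) 2
    _ = F := Real.sq_sqrt hF

end SquareMatrix

section Blocks

variable {m n : ℕ} (M : Matrix (Fin m × Fin n) (Fin m × Fin n) ℂ)

lemma blk_conjTranspose (k l : Fin n) : blk Mᴴ k l = (blk M l k)ᴴ := rfl

lemma sum_opNorm_sq_blockColumn_le (k : Fin n) :
    ∑ l, opNorm (blk M l k) ^ 2 ≤ m * opNorm M ^ 2 :=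
  calc ∑ l, opNorm (blk M l k) ^ 2 ≤ ∑ l, ∑ a, ∑ b, ‖M (a, l) (b, k)‖ ^ 2 :=
        Finset.sum_le_sum fun l _ ↦ opNorm_sq_le_sum_norm_sq (blk M l k)
    _ = ∑ b, ∑ p, ‖M p (b, k)‖ ^ 2 := by
        simp_rw [Fintype.sum_prod_type]
        rw [Finset.sum_comm, Finset.sum_congr rfl fun a _ ↦ Finset.sum_comm, Finset.sum_comm]
    _ ≤ ∑ _b : Fin m, opNorm M ^ 2 :=
        Finset.sum_le_sum fun b _ ↦ sum_norm_sq_col_le_opNorm_sq M (b, k)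
    _ = m * opNorm M ^ 2 := by simp

lemma sum_opNorm_sq_blockRow_le (k : Fin n) :
    ∑ l, opNorm (blk M k l) ^ 2 ≤ m * opNorm M ^ 2 := by
  simpa only [blk_conjTranspose, opNorm_conjTranspose] using sum_opNorm_sq_blockColumn_le Mᴴ k

end Blocks

/-- for any fixed `k`, `Σ_l ‖M_{lk}‖² ≤ m ‖M‖²` and `Σ_l ‖M_{kl}‖² ≤ m ‖M‖²`;
consequently `(1/n) Σ_{k,l} ‖M_{kl}‖² ≤ m ‖M‖²`. -/
theorem stmt5 {m n : ℕ} (M : Matrix (Fin m × Fin n) (Fin m × Fin n) ℂ) :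
    (∀ k : Fin n, ∑ l : Fin n, opNorm (blk M l k) ^ 2 ≤ (m : ℝ) * opNorm M ^ 2) ∧
    (∀ k : Fin n, ∑ l : Fin n, opNorm (blk M k l) ^ 2 ≤ (m : ℝ) * opNorm M ^ 2) ∧
    (1 / (n : ℝ)) * ∑ k : Fin n, ∑ l : Fin n, opNorm (blk M k l) ^ 2
      ≤ (m : ℝ) * opNorm M ^ 2 := by
  refine ⟨sum_opNorm_sq_blockColumn_le M, sum_opNorm_sq_blockRow_le M, ?_⟩
  have hn : 1 / (n : ℝ) * n ≤ 1 := by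
    rw [one_div]; exact inv_mul_le_one_of_le₀ le_rfl (Nat.cast_nonneg n)
  calc 1 / (n : ℝ) * ∑ k, ∑ l, opNorm (blk M k l) ^ 2
      ≤ 1 / (n : ℝ) * ∑ _k : Fin n, m * opNorm M ^ 2 := by
        gcongr with k
        exact sum_opNorm_sq_blockRow_le M k
    _ = (1 / (n : ℝ) * n) * (m * opNorm M ^ 2) := by simp [mul_assoc]
    _ ≤ m * opNorm M ^ 2 := mul_le_of_le_one_left (by positivity) hn
end

section
/- Let λ ∈ M_m(ℂ) be such that Im(λ) := (λ − λ*)/(2i) is positive definite, and let H be a Hermitian (mn)×(mn) matrix. Then λ⊗I_n − H is invertible and, writing R = (λ⊗I_n − H)^{-1} with m×m blocks R_{kl}: (i) ‖R‖ ≤ ‖(Im λ)^{-1}‖; (ii) ‖R_{kl}‖ ≤ ‖(Im λ)^{-1}‖ for all 1 ≤ k,l ≤ n; (iii) for every real p ≥ 2, (1/n)·Σ_{k,l=1}^n ‖R_{kl}‖^p ≤ m·‖(Im λ)^{-1}‖^p. -/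
open scoped Kronecker ComplexOrder

/-- The imaginary part `(T - T*) / (2i)` of a square complex matrix. -/
noncomputable def imPart {ι : Type*} (T : Matrix ι ι ℂ) : Matrix ι ι ℂ :=
  (2 * Complex.I)⁻¹ • (T - T.conjTranspose)

/-!
Write `T = λ ⊗ Iₙ - H`. Since `H` is Hermitian, `Im T = Im λ ⊗ Iₙ`, so positivity of `Im λ`
gives `‖x‖² ≤ ‖(Im λ)⁻¹‖ · Im ⟨x, T x⟩ ≤ ‖(Im λ)⁻¹‖ ‖x‖ ‖T x‖`. Hence `T` is injective, so
invertible, with `‖T⁻¹‖ ≤ ‖(Im λ)⁻¹‖`; each block `R_{kl}` is a compression of `R = T⁻¹` and has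
no larger norm. Finally `∑ ‖R_{kl}‖² ≤ ∑ |R_{ij}|² ≤ mn ‖R‖²` (Hilbert–Schmidt), and
`‖R_{kl}‖^p ≤ ‖(Im λ)⁻¹‖^(p-2) ‖R_{kl}‖²` turns this into the `p`-th moment bound.
-/

open Matrix WithLp
open scoped Matrix.Norms.L2Operator

namespace Matrix

section L2OpNorm

variable {𝕜 ι κ : Type*} [RCLike 𝕜] [Fintype ι] [Fintype κ] [DecidableEq κ]

lemma norm_toLp_mulVec_le (A : Matrix ι κ 𝕜) (v : κ → 𝕜) :
    ‖toLp 2 (A *ᵥ v)‖ ≤ ‖A‖ * ‖toLp 2 v‖ :=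
  A.l2_opNorm_mulVec (toLp 2 v)

lemma l2_opNorm_le_of_norm_toLp_mulVec_le [DecidableEq ι] (A : Matrix ι ι 𝕜) {c : ℝ} (hc : 0 ≤ c)
    (h : ∀ v, ‖toLp 2 (A *ᵥ v)‖ ≤ c * ‖toLp 2 v‖) : ‖A‖ ≤ c :=
  (toEuclideanCLM (𝕜 := 𝕜) A).opNorm_le_bound hc fun x => by
    simpa only [← toEuclideanCLM_toLp, toLp_ofLp] using h (ofLp x)

lemma sum_norm_sq_apply_le (A : Matrix ι κ 𝕜) (j : κ) : ∑ i, ‖A i j‖ ^ 2 ≤ ‖A‖ ^ 2 := by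
  have h := norm_toLp_mulVec_le A (Pi.single j 1)
  rw [mulVec_single_one, PiLp.toLp_single, PiLp.norm_single, norm_one, mul_one] at h
  calc ∑ i, ‖A i j‖ ^ 2 = ‖toLp 2 (A.col j)‖ ^ 2 := by simp [EuclideanSpace.norm_sq_eq]
    _ ≤ ‖A‖ ^ 2 := by gcongr

lemma sum_sum_norm_sq_le_card_mul (A : Matrix ι κ 𝕜) :
    ∑ i, ∑ j, ‖A i j‖ ^ 2 ≤ Fintype.card κ * ‖A‖ ^ 2 := by
  rw [Finset.sum_comm, ← nsmul_eq_mul, ← Finset.card_univ, ← Finset.sum_const]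
  exact Finset.sum_le_sum fun j _ => A.sum_norm_sq_apply_le j

lemma l2_opNorm_sq_le_sum_sum_norm_sq [DecidableEq ι] (A : Matrix ι ι 𝕜) :
    ‖A‖ ^ 2 ≤ ∑ i, ∑ j, ‖A i j‖ ^ 2 := by
  rw [← Real.sqrt_le_sqrt_iff (by positivity), Real.sqrt_sq (norm_nonneg _)]
  refine A.l2_opNorm_le_of_norm_toLp_mulVec_le (Real.sqrt_nonneg _) fun v => ?_
  rw [← Real.sqrt_sq (norm_nonneg (toLp 2 v)), ← Real.sqrt_mul (by positivity),
    ← Real.sqrt_sq (norm_nonneg (toLp 2 (A *ᵥ v)))]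
  gcongr
  simp only [EuclideanSpace.norm_sq_eq]
  rw [Finset.sum_mul]
  refine Finset.sum_le_sum fun i _ => ?_
  calc ‖(A *ᵥ v) i‖ ^ 2 ≤ (∑ j, ‖A i j‖ * ‖v j‖) ^ 2 := by
        gcongr
        simp only [mulVec, dotProduct, ← norm_mul]
        exact norm_sum_le _ _
    _ ≤ (∑ j, ‖A i j‖ ^ 2) * ∑ j, ‖v j‖ ^ 2 := Finset.sum_mul_sq_le_sq_mul_sq _ _ _

lemma l2_opNorm_one_le : ‖(1 : Matrix κ κ 𝕜)‖ ≤ 1 :=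
  l2_opNorm_le_of_norm_toLp_mulVec_le _ zero_le_one fun v => by rw [one_mulVec, one_mul]

lemma l2_opNorm_one_submatrix_le {κ' : Type*} [Fintype κ'] [DecidableEq κ'] {f : κ' → κ}
    (hf : f.Injective) : ‖(1 : Matrix κ κ 𝕜).submatrix id f‖ ≤ 1 := by
  have hP : ((1 : Matrix κ κ 𝕜).submatrix id f)ᴴ * (1 : Matrix κ κ 𝕜).submatrix id f = 1 := by
    ext i j
    simp [mul_apply, one_apply, hf.eq_iff]
  have h := l2_opNorm_conjTranspose_mul_self ((1 : Matrix κ κ 𝕜).submatrix id f)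
  rw [hP] at h
  nlinarith [l2_opNorm_one_le (𝕜 := 𝕜) (κ := κ'), norm_nonneg ((1 : Matrix κ κ 𝕜).submatrix id f)]

lemma l2_opNorm_submatrix_le [DecidableEq ι] {ι' κ' : Type*} [Fintype ι'] [Fintype κ']
    [DecidableEq ι'] [DecidableEq κ'] (A : Matrix ι κ 𝕜) {e : ι' → ι} {f : κ' → κ}
    (he : e.Injective) (hf : f.Injective) : ‖A.submatrix e f‖ ≤ ‖A‖ := by
  have hA : A.submatrix e f = ((1 : Matrix ι ι 𝕜).submatrix id e)ᴴ * A *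
      (1 : Matrix κ κ 𝕜).submatrix id f := by
    ext i j
    simp [mul_apply, one_apply]
  calc ‖A.submatrix e f‖
      ≤ ‖((1 : Matrix ι ι 𝕜).submatrix id e)ᴴ‖ * ‖A‖ * ‖(1 : Matrix κ κ 𝕜).submatrix id f‖ := by
        rw [hA]; exact (l2_opNorm_mul _ _).trans (by gcongr; exact l2_opNorm_mul _ _)
    _ ≤ 1 * ‖A‖ * 1 := by
        rw [l2_opNorm_conjTranspose]
        gcongr
        exacts [l2_opNorm_one_submatrix_le he, l2_opNorm_one_submatrix_le hf]
    _ = ‖A‖ := by ring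

lemma norm_toLp_sq_eq_re_star_dotProduct (w : ι → 𝕜) :
    ‖toLp 2 w‖ ^ 2 = RCLike.re (star w ⬝ᵥ w) := by
  rw [← inner_self_eq_norm_sq (𝕜 := 𝕜), EuclideanSpace.inner_eq_star_dotProduct, dotProduct_comm]

open scoped MatrixOrder in
lemma PosDef.norm_toLp_sq_le [DecidableEq ι] {S : Matrix ι ι 𝕜} (hS : S.PosDef) (u : ι → 𝕜) :
    ‖toLp 2 u‖ ^ 2 ≤ ‖S⁻¹‖ * RCLike.re (star u ⬝ᵥ S *ᵥ u) := by
  obtain ⟨B, hB, rfl⟩ :=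
    CStarAlgebra.isStrictlyPositive_iff_eq_star_mul_self.mp hS.isStrictlyPositive
  have hBdet : IsUnit B.det := (isUnit_iff_isUnit_det B).mp hB
  have hu : u = B⁻¹ *ᵥ B *ᵥ u := by rw [mulVec_mulVec, nonsing_inv_mul _ hBdet, one_mulVec]
  have hinv : ‖(star B * B)⁻¹‖ = ‖B⁻¹‖ ^ 2 := by
    rw [star_eq_conjTranspose, mul_inv_rev, ← conjTranspose_nonsing_inv, sq,
      ← l2_opNorm_conjTranspose B⁻¹, ← l2_opNorm_conjTranspose_mul_self,
      conjTranspose_conjTranspose]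
  have hquad : RCLike.re (star u ⬝ᵥ (star B * B) *ᵥ u) = ‖toLp 2 (B *ᵥ u)‖ ^ 2 := by
    rw [norm_toLp_sq_eq_re_star_dotProduct, star_mulVec, ← dotProduct_mulVec, mulVec_mulVec,
      star_eq_conjTranspose]
  calc ‖toLp 2 u‖ ^ 2 ≤ (‖B⁻¹‖ * ‖toLp 2 (B *ᵥ u)‖) ^ 2 := by
        conv_lhs => rw [hu]
        gcongr
        exact norm_toLp_mulVec_le _ _
    _ = ‖(star B * B)⁻¹‖ * RCLike.re (star u ⬝ᵥ (star B * B) *ᵥ u) := by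
        rw [mul_pow, hinv, hquad]

lemma kronecker_one_mulVec_apply (S : Matrix ι ι 𝕜) (x : ι × κ → 𝕜) (a : ι) (k : κ) :
    ((S ⊗ₖ (1 : Matrix κ κ 𝕜)) *ᵥ x) (a, k) = (S *ᵥ fun b => x (b, k)) a := by
  simp [mulVec, dotProduct, Fintype.sum_prod_type_right, one_apply]

lemma star_dotProduct_kronecker_one_mulVec (S : Matrix ι ι 𝕜) (x : ι × κ → 𝕜) :
    star x ⬝ᵥ (S ⊗ₖ (1 : Matrix κ κ 𝕜)) *ᵥ x =
      ∑ k, star (fun a => x (a, k)) ⬝ᵥ S *ᵥ fun a => x (a, k) := by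
  simp only [dotProduct, Fintype.sum_prod_type_right, kronecker_one_mulVec_apply, Pi.star_apply]

open scoped MatrixOrder in
lemma PosDef.norm_toLp_sq_le_kronecker_one [DecidableEq ι] {S : Matrix ι ι 𝕜} (hS : S.PosDef)
    (x : ι × κ → 𝕜) :
    ‖toLp 2 x‖ ^ 2 ≤ ‖S⁻¹‖ * RCLike.re (star x ⬝ᵥ (S ⊗ₖ (1 : Matrix κ κ 𝕜)) *ᵥ x) := by
  rw [star_dotProduct_kronecker_one_mulVec, map_sum, Finset.mul_sum, EuclideanSpace.norm_sq_eq,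
    Fintype.sum_prod_type_right]
  refine Finset.sum_le_sum fun k _ => ?_
  simpa [EuclideanSpace.norm_sq_eq] using hS.norm_toLp_sq_le fun a => x (a, k)

end L2OpNorm

section Coercive

variable {ι : Type*} [Fintype ι] {T : Matrix ι ι ℂ} {K : ℝ}

lemma im_star_dotProduct_mulVec_le (T : Matrix ι ι ℂ) (x : ι → ℂ) :
    (star x ⬝ᵥ T *ᵥ x).im ≤ ‖toLp 2 x‖ * ‖toLp 2 (T *ᵥ x)‖ := by
  have hinner : star x ⬝ᵥ T *ᵥ x = inner ℂ (toLp 2 x) (toLp 2 (T *ᵥ x)) := by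
    rw [EuclideanSpace.inner_eq_star_dotProduct, dotProduct_comm]
  rw [hinner]
  exact (Complex.im_le_norm _).trans (norm_inner_le_norm _ _)

lemma norm_toLp_le_of_norm_sq_le_mul_im (hK : 0 ≤ K)
    (h : ∀ x, ‖toLp 2 x‖ ^ 2 ≤ K * (star x ⬝ᵥ T *ᵥ x).im) (x : ι → ℂ) :
    ‖toLp 2 x‖ ≤ K * ‖toLp 2 (T *ᵥ x)‖ := by
  have hsq : ‖toLp 2 x‖ * ‖toLp 2 x‖ ≤ ‖toLp 2 x‖ * (K * ‖toLp 2 (T *ᵥ x)‖) :=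
    calc ‖toLp 2 x‖ * ‖toLp 2 x‖ ≤ K * (star x ⬝ᵥ T *ᵥ x).im := by rw [← sq]; exact h x
      _ ≤ K * (‖toLp 2 x‖ * ‖toLp 2 (T *ᵥ x)‖) := by
          gcongr; exact im_star_dotProduct_mulVec_le T x
      _ = ‖toLp 2 x‖ * (K * ‖toLp 2 (T *ᵥ x)‖) := by ring
  rcases (norm_nonneg (toLp 2 x)).eq_or_lt with hx | hx
  · rw [← hx]; positivity
  · exact le_of_mul_le_mul_left hsq hx

lemma isUnit_of_norm_toLp_le [DecidableEq ι] (h : ∀ x, ‖toLp 2 x‖ ≤ K * ‖toLp 2 (T *ᵥ x)‖) :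
    IsUnit T := by
  refine mulVec_injective_iff_isUnit.mp fun x y hxy => ?_
  have hxy' := h (x - y)
  rw [mulVec_sub, hxy, sub_self, toLp_zero, norm_zero, mul_zero, norm_le_zero_iff,
    toLp_eq_zero] at hxy'
  exact sub_eq_zero.mp hxy'

lemma l2_opNorm_inv_le_of_norm_toLp_le [DecidableEq ι] (hK : 0 ≤ K)
    (h : ∀ x, ‖toLp 2 x‖ ≤ K * ‖toLp 2 (T *ᵥ x)‖) : ‖T⁻¹‖ ≤ K := by
  have hdet : IsUnit T.det := (isUnit_iff_isUnit_det T).mp (isUnit_of_norm_toLp_le h)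
  refine T⁻¹.l2_opNorm_le_of_norm_toLp_mulVec_le hK fun v => ?_
  simpa only [mulVec_mulVec, mul_nonsing_inv _ hdet, one_mulVec] using h (T⁻¹ *ᵥ v)

end Coercive

end Matrix

section ImPart

variable {ι κ : Type*}

lemma imPart_kronecker_one_sub [DecidableEq κ] (lam : Matrix ι ι ℂ)
    {H : Matrix (ι × κ) (ι × κ) ℂ} (hH : H.IsHermitian) :
    imPart (lam ⊗ₖ (1 : Matrix κ κ ℂ) - H) = imPart lam ⊗ₖ (1 : Matrix κ κ ℂ) := by
  have hH' : ∀ i j, star (H j i) = H i j := fun i j => congrFun (congrFun hH i) j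
  ext ⟨a, k⟩ ⟨b, l⟩
  by_cases hkl : k = l
  · subst hkl; simp [imPart, hH']
  · simp [imPart, hH', one_apply, hkl, Ne.symm hkl]

lemma re_star_dotProduct_imPart_mulVec [Fintype ι] (T : Matrix ι ι ℂ) (x : ι → ℂ) :
    (star x ⬝ᵥ imPart T *ᵥ x).re = (star x ⬝ᵥ T *ᵥ x).im := by
  have hconj : star x ⬝ᵥ Tᴴ *ᵥ x = star (star x ⬝ᵥ T *ᵥ x) := by
    rw [star_dotProduct, star_mulVec, conjTranspose_conjTranspose, ← dotProduct_mulVec]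
  rw [imPart, smul_mulVec, dotProduct_smul, sub_mulVec, dotProduct_sub, hconj, Complex.star_def,
    Complex.sub_conj, smul_eq_mul]
  field_simp
  simp

end ImPart

lemma Real.rpow_le_rpow_sub_two_mul_sq {x K p : ℝ} (hx : 0 ≤ x) (hxK : x ≤ K) (hp : 2 ≤ p) :
    x ^ p ≤ K ^ (p - 2) * x ^ 2 := by
  calc x ^ p = x ^ (p - 2) * x ^ 2 := by
        rw [← Real.rpow_two, ← Real.rpow_add' hx (by linarith), sub_add_cancel]
    _ ≤ K ^ (p - 2) * x ^ 2 := by gcongr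

lemma Finset.sum_rpow_le_of_sum_sq_le {ι : Type*} {s : Finset ι} {x : ι → ℝ} {K C p : ℝ}
    (hK : 0 ≤ K) (hx : ∀ i ∈ s, 0 ≤ x i) (hxK : ∀ i ∈ s, x i ≤ K)
    (hsq : ∑ i ∈ s, x i ^ 2 ≤ C * K ^ 2) (hp : 2 ≤ p) :
    ∑ i ∈ s, x i ^ p ≤ C * K ^ p := by
  calc ∑ i ∈ s, x i ^ p ≤ ∑ i ∈ s, K ^ (p - 2) * x i ^ 2 :=
        Finset.sum_le_sum fun i hi => Real.rpow_le_rpow_sub_two_mul_sq (hx i hi) (hxK i hi) hp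
    _ ≤ K ^ (p - 2) * (C * K ^ 2) := by rw [← Finset.mul_sum]; gcongr
    _ = C * K ^ p := by
        rw [mul_left_comm, ← Real.rpow_two, ← Real.rpow_add' hK (by linarith), sub_add_cancel]

lemma opNorm_eq_l2_opNorm {ι : Type*} [Fintype ι] [DecidableEq ι] (M : Matrix ι ι ℂ) :
    opNorm M = ‖M‖ :=
  rfl

lemma l2_opNorm_blk_le {m n : ℕ} (R : Matrix (Fin m × Fin n) (Fin m × Fin n) ℂ) (k l : Fin n) :
    ‖blk R k l‖ ≤ ‖R‖ :=
  R.l2_opNorm_submatrix_le (fun _ _ h => (Prod.mk.inj h).1) (fun _ _ h => (Prod.mk.inj h).1)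

lemma sum_sum_l2_opNorm_blk_sq_le {m n : ℕ} (R : Matrix (Fin m × Fin n) (Fin m × Fin n) ℂ) :
    ∑ k, ∑ l, ‖blk R k l‖ ^ 2 ≤ n * m * ‖R‖ ^ 2 := by
  calc ∑ k, ∑ l, ‖blk R k l‖ ^ 2 ≤ ∑ k, ∑ l, ∑ a, ∑ b, ‖R (a, k) (b, l)‖ ^ 2 := by
        gcongr with k _ l
        exact (blk R k l).l2_opNorm_sq_le_sum_sum_norm_sq
    _ = ∑ i, ∑ j, ‖R i j‖ ^ 2 := by
        simp only [Fintype.sum_prod_type_right]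
        exact Finset.sum_congr rfl fun _ _ => Finset.sum_comm
    _ ≤ Fintype.card (Fin m × Fin n) * ‖R‖ ^ 2 := R.sum_sum_norm_sq_le_card_mul
    _ = n * m * ‖R‖ ^ 2 := by simp [mul_comm]

lemma norm_toLp_sq_le_mul_im_kronecker_one_sub {ι κ : Type*} [Fintype ι] [DecidableEq ι]
    [Fintype κ] [DecidableEq κ] {lam : Matrix ι ι ℂ} (hlam : (imPart lam).PosDef)
    {H : Matrix (ι × κ) (ι × κ) ℂ} (hH : H.IsHermitian) (x : ι × κ → ℂ) :
    ‖toLp 2 x‖ ^ 2 ≤ ‖(imPart lam)⁻¹‖ * (star x ⬝ᵥ (lam ⊗ₖ (1 : Matrix κ κ ℂ) - H) *ᵥ x).im := by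
  rw [← re_star_dotProduct_imPart_mulVec, imPart_kronecker_one_sub lam hH]
  exact hlam.norm_toLp_sq_le_kronecker_one x

/-- if `Im λ` is positive definite and `H` is Hermitian, then `λ ⊗ Iₙ - H` is
invertible and its inverse `R` satisfies `‖R‖ ≤ ‖(Im λ)⁻¹‖`, `‖R_{kl}‖ ≤ ‖(Im λ)⁻¹‖` for all
`k, l`, and `(1/n) Σ_{k,l} ‖R_{kl}‖^p ≤ m ‖(Im λ)⁻¹‖^p` for every real `p ≥ 2`. -/
theorem stmt6 {m n : ℕ} (lam : Matrix (Fin m) (Fin m) ℂ) (hlam : (imPart lam).PosDef)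
    (H : Matrix (Fin m × Fin n) (Fin m × Fin n) ℂ) (hH : H.IsHermitian) :
    IsUnit (lam ⊗ₖ (1 : Matrix (Fin n) (Fin n) ℂ) - H) ∧
    opNorm ((lam ⊗ₖ (1 : Matrix (Fin n) (Fin n) ℂ) - H)⁻¹) ≤ opNorm ((imPart lam)⁻¹) ∧
    (∀ k l : Fin n,
      opNorm (blk ((lam ⊗ₖ (1 : Matrix (Fin n) (Fin n) ℂ) - H)⁻¹) k l)
        ≤ opNorm ((imPart lam)⁻¹)) ∧
    ∀ p : ℝ, 2 ≤ p →
      (1 / (n : ℝ)) * ∑ k : Fin n, ∑ l : Fin n,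
          opNorm (blk ((lam ⊗ₖ (1 : Matrix (Fin n) (Fin n) ℂ) - H)⁻¹) k l) ^ p
        ≤ (m : ℝ) * opNorm ((imPart lam)⁻¹) ^ p := by
  simp only [opNorm_eq_l2_opNorm]
  set R := (lam ⊗ₖ (1 : Matrix (Fin n) (Fin n) ℂ) - H)⁻¹
  set K := ‖(imPart lam)⁻¹‖
  have hK : 0 ≤ K := norm_nonneg _
  have hlower := norm_toLp_le_of_norm_sq_le_mul_im hK
    (norm_toLp_sq_le_mul_im_kronecker_one_sub hlam hH)
  have hR : ‖R‖ ≤ K := l2_opNorm_inv_le_of_norm_toLp_le hK hlower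
  have hblk : ∀ k l, ‖blk R k l‖ ≤ K := fun k l => (l2_opNorm_blk_le R k l).trans hR
  refine ⟨isUnit_of_norm_toLp_le hlower, hR, hblk, fun p hp => ?_⟩
  have hsq : ∑ kl : Fin n × Fin n, ‖blk R kl.1 kl.2‖ ^ 2 ≤ n * m * K ^ 2 := by
    rw [Fintype.sum_prod_type]
    exact (sum_sum_l2_opNorm_blk_sq_le R).trans (by gcongr)
  have hp_sum := Finset.sum_rpow_le_of_sum_sq_le hK (fun kl _ => norm_nonneg (blk R kl.1 kl.2))
    (fun kl _ => hblk kl.1 kl.2) hsq hp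
  rw [Fintype.sum_prod_type, mul_assoc] at hp_sum
  rw [one_div_mul_eq_div]
  exact div_le_of_le_mul₀ n.cast_nonneg (by positivity) (by rwa [mul_comm])
end

section
/- Let M, W, N ∈ M_m(ℂ)⊗M_n(ℂ) with m×m blocks M_{kl}, W_{kl}, N_{kl} (1 ≤ k,l ≤ n). Then for any fixed p, q ∈ {1,…,n}: Σ_{i=1}^n Σ_{l=1}^n ‖M_{pi}‖·‖W_{il}‖·‖N_{lq}‖ ≤ m^{3/2}·√n·‖M‖·‖W‖·‖N‖. -/
open Matrix

open scoped Matrix.Norms.L2Operator in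
lemma opNorm_conjT {ι : Type*} [Fintype ι] [DecidableEq ι] (M : Matrix ι ι ℂ) :
    opNorm Mᴴ = opNorm M :=
  Matrix.l2_opNorm_conjTranspose M

lemma opNorm_nonneg {ι : Type*} [Fintype ι] [DecidableEq ι] (M : Matrix ι ι ℂ) :
    0 ≤ opNorm M := norm_nonneg _

/-- Column bound: the ℓ² norm of each column is at most the operator norm. -/
lemma col_sq_le {ι : Type*} [Fintype ι] [DecidableEq ι] (M : Matrix ι ι ℂ) (y : ι) :
    ∑ a : ι, ‖M a y‖ ^ 2 ≤ opNorm M ^ 2 := by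
  have h := (Matrix.toEuclideanCLM (𝕜 := ℂ) M).le_opNorm (EuclideanSpace.single y (1 : ℂ))
  rw [EuclideanSpace.norm_single, norm_one, mul_one] at h
  have hn : ‖Matrix.toEuclideanCLM (𝕜 := ℂ) M (EuclideanSpace.single y 1)‖
      = Real.sqrt (∑ a : ι, ‖M a y‖ ^ 2) := by
    rw [EuclideanSpace.norm_eq]
    congr 1
    refine Finset.sum_congr rfl fun a _ => ?_
    have : (Matrix.toEuclideanCLM (𝕜 := ℂ) M (EuclideanSpace.single y 1)) a
        = (M *ᵥ Pi.single y 1) a := rfl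
    rw [this, Matrix.mulVec_single]
    simp
  rw [hn] at h
  calc ∑ a : ι, ‖M a y‖ ^ 2 = Real.sqrt (∑ a : ι, ‖M a y‖ ^ 2) ^ 2 := by
        rw [Real.sq_sqrt]; positivity
    _ ≤ opNorm M ^ 2 := pow_le_pow_left₀ (Real.sqrt_nonneg _) h 2

/-- Row bound: the ℓ² norm of each row is at most the operator norm. -/
lemma row_sq_le {ι : Type*} [Fintype ι] [DecidableEq ι] (M : Matrix ι ι ℂ) (x : ι) :
    ∑ b : ι, ‖M x b‖ ^ 2 ≤ opNorm M ^ 2 := by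
  have h := col_sq_le Mᴴ x
  rw [opNorm_conjT] at h
  simpa [Matrix.conjTranspose_apply] using h

/-- The operator norm is at most the Frobenius norm. -/
lemma opNorm_le_frob {ι : Type*} [Fintype ι] [DecidableEq ι] (M : Matrix ι ι ℂ) :
    opNorm M ≤ Real.sqrt (∑ a : ι, ∑ b : ι, ‖M a b‖ ^ 2) := by
  unfold opNorm
  apply ContinuousLinearMap.opNorm_le_bound _ (Real.sqrt_nonneg _)
  intro x
  have hx : ∑ b : ι, ‖x b‖ ^ 2 = ‖x‖ ^ 2 := by
    rw [EuclideanSpace.norm_eq, Real.sq_sqrt]; positivity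
  rw [EuclideanSpace.norm_eq]
  rw [show Real.sqrt (∑ a : ι, ∑ b : ι, ‖M a b‖ ^ 2) * ‖x‖
      = Real.sqrt ((∑ a : ι, ∑ b : ι, ‖M a b‖ ^ 2) * ‖x‖ ^ 2) by
    rw [Real.sqrt_mul (Finset.sum_nonneg fun a _ => Finset.sum_nonneg fun b _ => sq_nonneg _),
      Real.sqrt_sq (norm_nonneg _)]]
  apply Real.sqrt_le_sqrt
  rw [Finset.sum_mul]
  refine Finset.sum_le_sum fun a _ => ?_
  have hcoord : (Matrix.toEuclideanCLM (𝕜 := ℂ) M x) a = (M *ᵥ x) a := rfl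
  rw [hcoord, ← hx, Matrix.mulVec, dotProduct]
  calc ‖∑ b : ι, M a b * x b‖ ^ 2 ≤ (∑ b : ι, ‖M a b‖ * ‖x b‖) ^ 2 := by
        apply pow_le_pow_left₀ (norm_nonneg _)
        exact (norm_sum_le _ _).trans (le_of_eq (Finset.sum_congr rfl fun b _ => norm_mul _ _))
    _ ≤ (∑ b : ι, ‖M a b‖ ^ 2) * ∑ b : ι, ‖x b‖ ^ 2 :=
        Finset.sum_mul_sq_le_sq_mul_sq _ _ _

/-- Sum of squared block norms along a block row. -/
lemma sum_row_blk {m n : ℕ} (M : Matrix (Fin m × Fin n) (Fin m × Fin n) ℂ) (p : Fin n) :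
    ∑ i : Fin n, opNorm (blk M p i) ^ 2 ≤ m * opNorm M ^ 2 := by
  have h1 : ∀ i : Fin n,
      opNorm (blk M p i) ^ 2 ≤ ∑ α : Fin m, ∑ β : Fin m, ‖M (α, p) (β, i)‖ ^ 2 := by
    intro i
    have h := opNorm_le_frob (blk M p i)
    have h2 := pow_le_pow_left₀ (opNorm_nonneg _) h 2
    rwa [Real.sq_sqrt (Finset.sum_nonneg fun _ _ => Finset.sum_nonneg fun _ _ => sq_nonneg _)]
      at h2
  calc ∑ i : Fin n, opNorm (blk M p i) ^ 2
      ≤ ∑ i : Fin n, ∑ α : Fin m, ∑ β : Fin m, ‖M (α, p) (β, i)‖ ^ 2 :=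
        Finset.sum_le_sum fun i _ => h1 i
    _ = ∑ α : Fin m, ∑ z : Fin m × Fin n, ‖M (α, p) z‖ ^ 2 := by
        rw [Finset.sum_comm]
        refine Finset.sum_congr rfl fun α _ => ?_
        rw [Fintype.sum_prod_type]
        exact Finset.sum_comm
    _ ≤ ∑ _α : Fin m, opNorm M ^ 2 :=
        Finset.sum_le_sum fun α _ => row_sq_le M (α, p)
    _ = m * opNorm M ^ 2 := by
        simp [Finset.sum_const, Finset.card_univ]

lemma blk_conjT {m n : ℕ} (N : Matrix (Fin m × Fin n) (Fin m × Fin n) ℂ) (k l : Fin n) :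
    blk Nᴴ k l = (blk N l k)ᴴ := by
  ext α β
  simp [blk, Matrix.conjTranspose_apply]

/-- Sum of squared block norms along a block column. -/
lemma sum_col_blk {m n : ℕ} (N : Matrix (Fin m × Fin n) (Fin m × Fin n) ℂ) (q : Fin n) :
    ∑ l : Fin n, opNorm (blk N l q) ^ 2 ≤ m * opNorm N ^ 2 := by
  have h := sum_row_blk Nᴴ q
  rw [opNorm_conjT] at h
  refine le_trans (le_of_eq ?_) h
  refine Finset.sum_congr rfl fun l _ => ?_
  rw [blk_conjT, opNorm_conjT]

/-- for fixed `p, q`,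
`Σ_{i,l} ‖M_{pi}‖ ‖W_{il}‖ ‖N_{lq}‖ ≤ m^{3/2} √n ‖M‖ ‖W‖ ‖N‖`. -/
theorem stmt16 {m n : ℕ} (M W N : Matrix (Fin m × Fin n) (Fin m × Fin n) ℂ) (p q : Fin n) :
    ∑ i : Fin n, ∑ l : Fin n, opNorm (blk M p i) * opNorm (blk W i l) * opNorm (blk N l q)
      ≤ (m : ℝ) ^ ((3 : ℝ) / 2) * Real.sqrt n * opNorm M * opNorm W * opNorm N := by
  have hA := sum_row_blk M p
  have hC := sum_col_blk N q
  have hB : ∑ i : Fin n, ∑ l : Fin n, opNorm (blk W i l) ^ 2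
      ≤ (n * m) * opNorm W ^ 2 := by
    calc ∑ i : Fin n, ∑ l : Fin n, opNorm (blk W i l) ^ 2
        ≤ ∑ _i : Fin n, (m : ℝ) * opNorm W ^ 2 :=
          Finset.sum_le_sum fun i _ => sum_row_blk W i
      _ = (n * m) * opNorm W ^ 2 := by
          simp [Finset.sum_const, Finset.card_univ]; ring
  set S : ℝ := ∑ i : Fin n, ∑ l : Fin n,
      opNorm (blk M p i) * opNorm (blk W i l) * opNorm (blk N l q) with hSdef
  have hSnn : 0 ≤ S := by
    refine Finset.sum_nonneg fun i _ => Finset.sum_nonneg fun l _ => ?_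
    exact mul_nonneg (mul_nonneg (opNorm_nonneg _) (opNorm_nonneg _)) (opNorm_nonneg _)
  have hS : S = ∑ z : Fin n × Fin n,
      (opNorm (blk M p z.1) * opNorm (blk N z.2 q)) * opNorm (blk W z.1 z.2) := by
    rw [hSdef, Fintype.sum_prod_type]
    exact Finset.sum_congr rfl fun i _ => Finset.sum_congr rfl fun l _ => by ring
  have hcs : S ^ 2 ≤ (∑ z : Fin n × Fin n, (opNorm (blk M p z.1) * opNorm (blk N z.2 q)) ^ 2)
      * (∑ z : Fin n × Fin n, opNorm (blk W z.1 z.2) ^ 2) := by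
    rw [hS]; exact Finset.sum_mul_sq_le_sq_mul_sq _ _ _
  have h1 : (∑ z : Fin n × Fin n, (opNorm (blk M p z.1) * opNorm (blk N z.2 q)) ^ 2)
      = (∑ i : Fin n, opNorm (blk M p i) ^ 2) * (∑ l : Fin n, opNorm (blk N l q) ^ 2) := by
    rw [Fintype.sum_prod_type, Finset.sum_mul_sum]
    exact Finset.sum_congr rfl fun i _ => Finset.sum_congr rfl fun l _ => mul_pow _ _ _
  have h2 : (∑ z : Fin n × Fin n, opNorm (blk W z.1 z.2) ^ 2)
      = ∑ i : Fin n, ∑ l : Fin n, opNorm (blk W i l) ^ 2 := by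
    rw [Fintype.sum_prod_type]
  have nA : 0 ≤ ∑ i : Fin n, opNorm (blk M p i) ^ 2 :=
    Finset.sum_nonneg fun _ _ => sq_nonneg _
  have nC : 0 ≤ ∑ l : Fin n, opNorm (blk N l q) ^ 2 :=
    Finset.sum_nonneg fun _ _ => sq_nonneg _
  have nB : 0 ≤ ∑ i : Fin n, ∑ l : Fin n, opNorm (blk W i l) ^ 2 :=
    Finset.sum_nonneg fun _ _ => Finset.sum_nonneg fun _ _ => sq_nonneg _
  have key : S ^ 2 ≤ ((m : ℝ) * opNorm M ^ 2) * ((m : ℝ) * opNorm N ^ 2)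
      * (((n : ℝ) * m) * opNorm W ^ 2) := by
    refine hcs.trans ?_
    rw [h1, h2]
    have hM0 : (0 : ℝ) ≤ (m : ℝ) * opNorm M ^ 2 :=
      mul_nonneg (Nat.cast_nonneg m) (sq_nonneg _)
    have hN0 : (0 : ℝ) ≤ (m : ℝ) * opNorm N ^ 2 :=
      mul_nonneg (Nat.cast_nonneg m) (sq_nonneg _)
    exact mul_le_mul (mul_le_mul hA hC nC hM0) hB nB (mul_nonneg hM0 hN0)
  have e1 : ((m : ℝ) ^ ((3 : ℝ) / 2)) ^ 2 = (m : ℝ) ^ (3 : ℕ) := by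
    rw [← Real.rpow_natCast ((m : ℝ) ^ ((3 : ℝ) / 2)) 2,
      ← Real.rpow_mul (Nat.cast_nonneg m), ← Real.rpow_natCast (m : ℝ) 3]
    norm_num
  have e2 : Real.sqrt n ^ 2 = (n : ℝ) := Real.sq_sqrt (Nat.cast_nonneg n)
  have hR2 : ((m : ℝ) ^ ((3 : ℝ) / 2) * Real.sqrt n * opNorm M * opNorm W * opNorm N) ^ 2
      = ((m : ℝ) * opNorm M ^ 2) * ((m : ℝ) * opNorm N ^ 2)
        * (((n : ℝ) * m) * opNorm W ^ 2) := by
    rw [mul_pow, mul_pow, mul_pow, mul_pow, e1, e2]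
    ring
  have hRnn : 0 ≤ (m : ℝ) ^ ((3 : ℝ) / 2) * Real.sqrt n * opNorm M * opNorm W * opNorm N := by
    have h0 : (0 : ℝ) ≤ (m : ℝ) ^ ((3 : ℝ) / 2) := Real.rpow_nonneg (Nat.cast_nonneg m) _
    exact mul_nonneg (mul_nonneg (mul_nonneg (mul_nonneg h0 (Real.sqrt_nonneg _))
      (opNorm_nonneg _)) (opNorm_nonneg _)) (opNorm_nonneg _)
  have hfin := Real.sqrt_le_sqrt (key.trans_eq hR2.symm)
  rwa [Real.sqrt_sq hSnn, Real.sqrt_sq hRnn] at hfin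
end
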